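/- Let μ be a partition with ℓ(μ) ≤ n and let m = (m_1, …, m_n) be a weakly increasing sequence of positive integers. Set b_c := 0 for all integers c ≤ 0. Then for all 1 ≤ i, j ≤ n, P_{i,j}^{μ,m}(x | b) := Σ_{r=0}^{μ_i+j−i} (−1)^r e_r(b_1,…,b_{μ_i+m_i−i}) h_{μ_i+j−i−r}(x_1,…,x_{m_i}) equals Σ_L w(L), the sum over directed up-right lattice paths L from (−j+1, 1) to (μ_i−i+1, m_i), where a horizontal step from (r,t) to (r+1,t) has weight x_t − b_{r+t} and w(L) is the product of weights of the horizontal steps of L. -/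

import Mathlib

open scoped Classical

noncomputable section

/-- The elementary symmetric polynomial `e_r(b_1, …, b_c)` (variables indexed from 1). -/
def epoly {R : Type} [CommRing R] (r c : ℕ) (b : ℕ → R) : R :=
  ∑ S ∈ (Finset.Icc 1 c).powersetCard r, ∏ i ∈ S, b i

/-- The complete homogeneous symmetric polynomial `h_k(x_1, …, x_m)`
(variables indexed from 1). -/
def hpoly {R : Type} [CommRing R] (k m : ℕ) (x : ℕ → R) : R :=
  ∑ α ∈ Finset.Nat.antidiagonalTuple m k, ∏ i : Fin m, x ((i : ℕ) + 1) ^ α i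

/-- The matrix entry `P_{i,j}^{μ,m}(x | b) = Σ_{r=0}^{μ_i+j-i} (-1)^r
e_r(b_1,…,b_{μ_i+m_i-i}) h_{μ_i+j-i-r}(x_1,…,x_{m_i})`, equal to `0` when `μ_i + j - i < 0`
(indices `i`, `j` 1-indexed in the mathematics, matrix indices `i j : Fin n` 0-indexed,
so `μ_i + j - i` reads `μ.rowLen i + j - i`). -/
def Pmat {R : Type} [CommRing R] (n : ℕ) (μ : YoungDiagram) (m : ℕ → ℕ)
    (x b : ℕ → R) (i j : Fin n) : R :=
  if μ.rowLen (i : ℕ) + (j : ℕ) < (i : ℕ) then 0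
  else
    ∑ r ∈ Finset.range (μ.rowLen (i : ℕ) + (j : ℕ) - (i : ℕ) + 1),
      (-1) ^ r * epoly r (μ.rowLen (i : ℕ) + m (i : ℕ) - ((i : ℕ) + 1)) b *
        hpoly (μ.rowLen (i : ℕ) + (j : ℕ) - (i : ℕ) - r) (m (i : ℕ)) x

/-- A directed lattice path of length `len` in `ℤ × ℤ` from `A` to `B`, using unit right
steps `(r,t) → (r+1,t)` and unit up steps `(r,t) → (r,t+1)`, encoded as the sequence of its
vertices (constantly `B` after step `len`, so that the path is determined by finitely many
values). -/
def IsLatticePath (len : ℕ) (A B : ℤ × ℤ) (L : ℕ → ℤ × ℤ) : Prop :=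
  L 0 = A ∧ (∀ k, len ≤ k → L k = B) ∧
    ∀ k, k < len → L (k + 1) = ((L k).1 + 1, (L k).2) ∨ L (k + 1) = ((L k).1, (L k).2 + 1)

/-- The weight of a lattice path: the product over its horizontal steps `(r,t) → (r+1,t)` of
`x t - b (r + t)`. -/
def pathWeight {R : Type} [CommRing R] (len : ℕ) (x b : ℤ → R) (L : ℕ → ℤ × ℤ) : R :=
  ∏ k ∈ Finset.range len,
    if L (k + 1) = ((L k).1 + 1, (L k).2) then x (L k).2 - b ((L k).1 + (L k).2) else 1

/-- The polynomial ring `ℚ[x_0, x_1, …; b_0, b_1, …]`. -/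
abbrev R8 : Type := MvPolynomial (ℕ ⊕ ℕ) ℚ

/-- The indeterminates `x i`. -/
def xv : ℕ → R8 := fun i => MvPolynomial.X (Sum.inl i)

/-- The indeterminates `b c`. -/
def bv : ℕ → R8 := fun c => MvPolynomial.X (Sum.inr c)

/-- The indeterminates `x`, extended to integer indices (only positive indices are used). -/
def xZ : ℤ → R8 := fun c => if c ≤ 0 then 0 else xv c.toNat

/-- The parameters `b`, extended by `b_c := 0` for integers `c ≤ 0`. -/
def bZ : ℤ → R8 := fun c => if c ≤ 0 then 0 else bv c.toNat
/-!
Splitting off the first step of a path gives the recursion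
`Z(c, t) = (x_t - b_{c+t}) Z(c+1, t) + Z(c, t+1)` for the weighted count of paths from `(c, t)`
to a fixed endpoint. On the other side, `Σ_r (-1)^r e_r(b) h_{k-r}(x)` is the coefficient of `X^k`
in `∏ (1 - b_i X) / ∏ (1 - x_i X)`, and the identity
`(1 - b X) / (1 - x X) = 1 + (x - b) X / (1 - x X)` for the first variables `x = x_t`,
`b = b_{c+t}` shows that these coefficients satisfy the same recursion. Finally, the variables
`b_c` with `c ≤ 0` met by paths starting left of the origin vanish, which shortens the `b`-list
to the one in `P_{i,j}`.
-/

section SymmetricFunctions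

open Finset

variable {R : Type} [CommRing R]

@[simp] lemma epoly_zero (c : ℕ) (b : ℕ → R) : epoly 0 c b = 1 := by
  simp [epoly]

lemma epoly_eq_zero_of_lt {r c : ℕ} (h : c < r) (b : ℕ → R) : epoly r c b = 0 := by
  rw [epoly, powersetCard_eq_empty.mpr (by simpa using h), sum_empty]

lemma epoly_congr {r c : ℕ} {b b' : ℕ → R} (h : ∀ i, 1 ≤ i → i ≤ c → b i = b' i) :
    epoly r c b = epoly r c b' :=
  sum_congr rfl fun _ hS => prod_congr rfl fun i hi => by
    obtain ⟨hi₁, hi₂⟩ := mem_Icc.mp ((mem_powersetCard.mp hS).1 hi)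
    exact h i hi₁ hi₂

lemma epoly_succ_succ (r c : ℕ) (b : ℕ → R) :
    epoly (r + 1) (c + 1) b
      = b 1 * epoly r c (fun i => b (i + 1)) + epoly (r + 1) c (fun i => b (i + 1)) := by
  set s := (Icc 1 c).map (addRightEmbedding 1)
  have h1 : (1 : ℕ) ∉ s := by simp [s]
  have hIcc : Icc 1 (c + 1) = insert 1 s := by
    ext i; simp [s]; omega
  have h1T {T : Finset ℕ} (hT : T ∈ s.powersetCard r) : 1 ∉ T :=
    fun h => h1 ((mem_powersetCard.mp hT).1 h)
  rw [epoly, hIcc, powersetCard_succ_insert h1, sum_union, sum_image, add_comm,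
    sum_congr rfl fun T hT => prod_insert (h1T hT)]
  · simp only [s, powersetCard_map, sum_map, mapEmbedding_apply, RelEmbedding.coe_toEmbedding,
      prod_map, addRightEmbedding_apply, epoly, mul_sum]
  · intro T hT T' hT' h
    rw [← erase_insert (h1T hT), ← erase_insert (h1T hT'), h]
  · refine disjoint_left.mpr fun T hT hT' => ?_
    obtain ⟨T', -, rfl⟩ := mem_image.mp hT'
    exact h1 ((mem_powersetCard.mp hT).1 (mem_insert_self 1 T'))

lemma epoly_succ_of_eq_zero (r c : ℕ) {b : ℕ → R} (hb : b 1 = 0) :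
    epoly r (c + 1) b = epoly r c (fun i => b (i + 1)) := by
  cases r with
  | zero => simp
  | succ r => rw [epoly_succ_succ, hb, zero_mul, zero_add]

lemma epoly_eq_of_eq_zero (r j : ℕ) {b : ℕ → R} (hb : ∀ i, 1 ≤ i → i ≤ j → b i = 0)
    (c : ℕ) :
    epoly r c b = epoly r (c - j) (fun i => b (i + j)) := by
  induction j generalizing b c with
  | zero => rfl
  | succ j ih =>
    cases c with
    | zero => rw [Nat.zero_sub]; exact epoly_congr fun i _ _ => by omega
    | succ c =>
      rw [epoly_succ_of_eq_zero r c (hb 1 le_rfl (by omega)),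
        ih (fun i hi₁ hi₂ => hb (i + 1) (by omega) (by omega)), Nat.add_sub_add_right]
      simp only [add_assoc]

@[simp] lemma hpoly_zero (M : ℕ) (x : ℕ → R) : hpoly 0 M x = 1 := by
  simp [hpoly, Nat.antidiagonalTuple_zero_right]

@[simp] lemma hpoly_succ_zero (k : ℕ) (x : ℕ → R) : hpoly (k + 1) 0 x = 0 := by
  simp [hpoly]

lemma hpoly_congr {k M : ℕ} {x x' : ℕ → R} (h : ∀ i, 1 ≤ i → i ≤ M → x i = x' i) :
    hpoly k M x = hpoly k M x' :=
  sum_congr rfl fun _ _ => prod_congr rfl fun i _ => by rw [h _ (by omega) (by omega)]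

lemma hpoly_succ_eq_sum_antidiagonal (k M : ℕ) (x : ℕ → R) :
    hpoly k (M + 1) x
      = ∑ p ∈ antidiagonal k, x 1 ^ p.1 * hpoly p.2 M (fun i => x (i + 1)) := by
  -- `Nat.antidiagonalTuple` is defined by a list recursion splitting off the first coordinate.
  have hlist (N n : ℕ) (f : (Fin N → ℕ) → R) :
      ∑ α ∈ Nat.antidiagonalTuple N n, f α
        = ((List.Nat.antidiagonalTuple N n).map f).sum := rfl
  have hlist' (f : ℕ × ℕ → R) :
      ∑ p ∈ antidiagonal k, f p = ((List.Nat.antidiagonal k).map f).sum := rfl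
  rw [hpoly, hlist, List.Nat.antidiagonalTuple, List.map_flatMap, List.flatMap, List.sum_flatten,
    hlist', List.map_map]
  congr 2
  funext p
  rw [Function.comp_apply, hpoly, hlist, ← List.sum_map_mul_left, List.map_map]
  congr 1
  refine List.map_congr_left fun α _ => ?_
  simp [Fin.prod_univ_succ]

lemma hpoly_succ_succ (k M : ℕ) (x : ℕ → R) :
    hpoly (k + 1) (M + 1) x
      = x 1 * hpoly k (M + 1) x + hpoly (k + 1) M (fun i => x (i + 1)) := by
  rw [hpoly_succ_eq_sum_antidiagonal, Nat.sum_antidiagonal_succ, hpoly_succ_eq_sum_antidiagonal,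
    mul_sum, add_comm]
  simp only [pow_zero, one_mul, pow_succ, mul_assoc, mul_left_comm (x 1)]

end SymmetricFunctions

section SuperHpoly

open PowerSeries

variable {R : Type} [CommRing R]

def epolySeries (n : ℕ) (b : ℕ → R) : R⟦X⟧ := mk fun r => (-1) ^ r * epoly r n b

def hpolySeries (M : ℕ) (x : ℕ → R) : R⟦X⟧ := mk fun k => hpoly k M x

lemma epolySeries_succ (n : ℕ) (b : ℕ → R) :
    epolySeries (n + 1) b = (1 - C (b 1) * X) * epolySeries n (fun i => b (i + 1)) := by
  ext r
  cases r with
  | zero => simp [epolySeries]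
  | succ r =>
    rw [sub_mul, one_mul, mul_assoc, map_sub, coeff_C_mul, coeff_succ_X_mul]
    simp only [epolySeries, coeff_mk, epoly_succ_succ, pow_succ]
    ring

lemma hpolySeries_zero (x : ℕ → R) : hpolySeries 0 x = 1 := by
  ext k
  cases k <;> simp [hpolySeries]

lemma hpolySeries_succ (M : ℕ) (x : ℕ → R) :
    hpolySeries (M + 1) x
      = hpolySeries M (fun i => x (i + 1)) + C (x 1) * X * hpolySeries (M + 1) x := by
  ext k
  cases k with
  | zero => simp [hpolySeries]
  | succ k =>
    rw [map_add, mul_assoc, coeff_C_mul, coeff_succ_X_mul]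
    simp only [hpolySeries, coeff_mk, hpoly_succ_succ]
    ring

def superHpoly (x b : ℕ → R) (k n M : ℕ) : R := coeff k (epolySeries n b * hpolySeries M x)

lemma superHpoly_eq_sum_range (x b : ℕ → R) (k n M : ℕ) :
    superHpoly x b k n M
      = ∑ r ∈ Finset.range (k + 1), (-1) ^ r * epoly r n b * hpoly (k - r) M x := by
  rw [superHpoly, coeff_mul, Finset.Nat.sum_antidiagonal_eq_sum_range_succ_mk]
  simp [epolySeries, hpolySeries]

@[simp] lemma superHpoly_zero (x b : ℕ → R) (n M : ℕ) : superHpoly x b 0 n M = 1 := by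
  simp [superHpoly_eq_sum_range]

lemma superHpoly_succ_of_le {n k : ℕ} (h : n ≤ k) (x b : ℕ → R) :
    superHpoly x b (k + 1) n 0 = 0 := by
  rw [superHpoly, hpolySeries_zero, mul_one, epolySeries, coeff_mk,
    epoly_eq_zero_of_lt (by omega), mul_zero]

lemma superHpoly_succ (x b : ℕ → R) (k n M : ℕ) :
    superHpoly x b (k + 1) (n + 1) (M + 1)
      = (x 1 - b 1) * superHpoly x (fun i => b (i + 1)) k n (M + 1)
        + superHpoly (fun i => x (i + 1)) (fun i => b (i + 1)) (k + 1) n M := by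
  set E := epolySeries n (fun i => b (i + 1))
  have hseries : epolySeries (n + 1) b * hpolySeries (M + 1) x
      = X * (C (x 1 - b 1) * (E * hpolySeries (M + 1) x))
        + E * hpolySeries M (fun i => x (i + 1)) := by
    rw [epolySeries_succ, map_sub]
    linear_combination E * hpolySeries_succ M x
  rw [superHpoly, hseries, map_add, coeff_succ_X_mul, coeff_C_mul]
  rfl

end SuperHpoly

section LatticePaths

open Set

variable {R : Type} [CommRing R]

def pathCons (A : ℤ × ℤ) (L : ℕ → ℤ × ℤ) : ℕ → ℤ × ℤ
  | 0 => A
  | k + 1 => L k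

lemma IsLatticePath.tail {n : ℕ} {A B : ℤ × ℤ} {L : ℕ → ℤ × ℤ}
    (h : IsLatticePath (n + 1) A B L) :
    IsLatticePath n (L 1) B (fun k => L (k + 1)) ∧
      (L 1 = (A.1 + 1, A.2) ∨ L 1 = (A.1, A.2 + 1)) := by
  obtain ⟨h0, hB, hstep⟩ := h
  refine ⟨⟨rfl, fun k hk => hB (k + 1) (by omega), fun k hk => hstep (k + 1) (by omega)⟩,
    ?_⟩
  simpa [h0] using hstep 0 (by omega)

lemma IsLatticePath.le {n : ℕ} {A B : ℤ × ℤ} {L : ℕ → ℤ × ℤ}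
    (h : IsLatticePath n A B L) : A ≤ B := by
  induction n generalizing A L with
  | zero => exact (h.1.symm.trans (h.2.1 0 le_rfl)).le
  | succ n ih =>
    obtain ⟨hL, hA⟩ := h.tail
    refine le_trans ?_ (ih hL)
    rcases hA with hA | hA <;> rw [hA, Prod.mk_le_mk] <;> omega

lemma isLatticePath_pathCons {n : ℕ} {A A' B : ℤ × ℤ} {L : ℕ → ℤ × ℤ}
    (hL : IsLatticePath n A' B L) (hA : A' = (A.1 + 1, A.2) ∨ A' = (A.1, A.2 + 1)) :
    IsLatticePath (n + 1) A B (pathCons A L) := by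
  obtain ⟨h0, hB, hstep⟩ := hL
  refine ⟨rfl, fun k hk => ?_, fun k hk => ?_⟩
  · obtain ⟨k, rfl⟩ := Nat.exists_eq_add_of_le' (by omega : 1 ≤ k)
    exact hB k (by omega)
  · cases k with
    | zero => simpa [pathCons, h0] using hA
    | succ k => exact hstep k (by omega)

lemma bijOn_pathCons (n : ℕ) (A B : ℤ × ℤ) :
    BijOn (pathCons A)
      ({L | IsLatticePath n (A.1 + 1, A.2) B L} ∪ {L | IsLatticePath n (A.1, A.2 + 1) B L})
      {L | IsLatticePath (n + 1) A B L} := by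
  refine ⟨fun L hL => ?_, fun L _ L' _ h => funext fun k => congrFun h (k + 1), fun L hL => ?_⟩
  · rcases hL with hL | hL
    · exact isLatticePath_pathCons hL (Or.inl rfl)
    · exact isLatticePath_pathCons hL (Or.inr rfl)
  · obtain ⟨hL', hA⟩ := IsLatticePath.tail hL
    refine ⟨fun k => L (k + 1), ?_, funext fun k => ?_⟩
    · rcases hA with hA | hA
      · exact Or.inl (hA ▸ hL')
      · exact Or.inr (hA ▸ hL')
    · cases k with
      | zero => exact hL.1.symm
      | succ k => rfl

lemma finite_setOf_isLatticePath (n : ℕ) (A B : ℤ × ℤ) :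
    {L | IsLatticePath n A B L}.Finite := by
  induction n generalizing A with
  | zero =>
    refine (finite_singleton fun _ => B).subset fun L hL => funext fun k => hL.2.1 k (by omega)
  | succ n ih =>
    rw [← (bijOn_pathCons n A B).image_eq]
    exact ((ih _).union (ih _)).image _

lemma pathWeight_pathCons (n : ℕ) (x b : ℤ → R) (A : ℤ × ℤ) (L : ℕ → ℤ × ℤ) :
    pathWeight (n + 1) x b (pathCons A L)
      = (if L 0 = (A.1 + 1, A.2) then x A.2 - b (A.1 + A.2) else 1) * pathWeight n x b L := by
  rw [pathWeight, Finset.prod_range_succ', mul_comm]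
  rfl

def latticePathSum (x b : ℤ → R) (len : ℕ) (A B : ℤ × ℤ) : R :=
  ∑ᶠ L ∈ {L | IsLatticePath len A B L}, pathWeight len x b L

lemma latticePathSum_zero (x b : ℤ → R) (A : ℤ × ℤ) : latticePathSum x b 0 A A = 1 := by
  have hpaths : {L | IsLatticePath 0 A A L} = {fun _ => A} := by
    ext L
    refine ⟨fun hL => funext fun k => hL.2.1 k (by omega), ?_⟩
    rintro rfl
    exact ⟨rfl, fun _ _ => rfl, fun _ hk => absurd hk (by omega)⟩
  rw [latticePathSum, hpaths, finsum_mem_singleton, pathWeight, Finset.prod_range_zero]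

lemma latticePathSum_of_not_le (x b : ℤ → R) (n : ℕ) {A B : ℤ × ℤ} (h : ¬ A ≤ B) :
    latticePathSum x b n A B = 0 := by
  have hpaths : {L | IsLatticePath n A B L} = ∅ :=
    eq_empty_of_forall_notMem fun _ hL => h (IsLatticePath.le hL)
  rw [latticePathSum, hpaths, finsum_mem_empty]

lemma latticePathSum_succ (x b : ℤ → R) (n : ℕ) (A B : ℤ × ℤ) :
    latticePathSum x b (n + 1) A B
      = (x A.2 - b (A.1 + A.2)) * latticePathSum x b n (A.1 + 1, A.2) B
        + latticePathSum x b n (A.1, A.2 + 1) B := by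
  have hdisj : Disjoint {L | IsLatticePath n (A.1 + 1, A.2) B L}
      {L | IsLatticePath n (A.1, A.2 + 1) B L} :=
    disjoint_left.mpr fun L hL hL' => by
      have := hL.1.symm.trans hL'.1
      simp [Prod.ext_iff] at this
  rw [latticePathSum, ← finsum_mem_eq_of_bijOn _ (bijOn_pathCons n A B) fun _ _ => rfl,
    finsum_mem_union hdisj (finite_setOf_isLatticePath _ _ _) (finite_setOf_isLatticePath _ _ _),
    latticePathSum, latticePathSum, mul_finsum_mem' _ _ (finite_setOf_isLatticePath _ _ _)]
  congr 1
  · refine finsum_mem_congr rfl fun L hL => ?_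
    rw [pathWeight_pathCons, if_pos hL.1]
  · refine finsum_mem_congr rfl fun L hL => ?_
    rw [pathWeight_pathCons, if_neg (by simp [hL.1]), one_mul]

end LatticePaths

def seqFrom {α : Type} (f : ℤ → α) (s : ℤ) : ℕ → α := fun i => f (s + i - 1)

lemma seqFrom_one {α : Type} (f : ℤ → α) (s : ℤ) : seqFrom f s 1 = f s := by
  simp [seqFrom]

lemma seqFrom_succ {α : Type} (f : ℤ → α) (s : ℤ) :
    (fun i => seqFrom f s (i + 1)) = seqFrom f (s + 1) := by
  funext i
  simp only [seqFrom, Nat.cast_add, Nat.cast_one]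
  ring_nf

section PathsVersusSuperHpoly

variable {R : Type} [CommRing R]

lemma latticePathSum_eq_superHpoly (x b : ℤ → R) {H V N : ℕ} (hN : H + V = N) (c t : ℤ) :
    latticePathSum x b N (c, t) (c + H, t + V)
      = superHpoly (seqFrom x t) (seqFrom b (c + t)) H N (V + 1) := by
  induction N generalizing H V c t with
  | zero =>
    obtain ⟨rfl, rfl⟩ : H = 0 ∧ V = 0 := by omega
    simpa using latticePathSum_zero x b (c, t)
  | succ N ih =>
    rw [latticePathSum_succ]
    dsimp only
    rcases H with _ | H
    · have h := ih (H := 0) (V := N) (by omega) c (t + 1)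
      rw [superHpoly_zero] at h
      rw [latticePathSum_of_not_le x b N (A := (c + 1, t)) (by simp [Prod.mk_le_mk]), mul_zero,
        zero_add, superHpoly_zero]
      convert h using 2
      obtain rfl : V = N + 1 := by omega
      push_cast; ring_nf
    rw [superHpoly_succ, seqFrom_one, seqFrom_one, seqFrom_succ, seqFrom_succ]
    rcases V with _ | V
    · have h := ih (H := H) (V := 0) (by omega) (c + 1) t
      rw [latticePathSum_of_not_le x b N (A := (c, t + 1)) (by simp [Prod.mk_le_mk]),
        superHpoly_succ_of_le (by omega), add_zero, add_zero]
      congr 1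
      convert h using 2 <;> push_cast <;> ring_nf
    · have h₁ := ih (H := H) (V := V + 1) (by omega) (c + 1) t
      have h₂ := ih (H := H + 1) (V := V) (by omega) c (t + 1)
      congr 2
      · convert h₁ using 2 <;> push_cast <;> ring_nf
      · convert h₂ using 2 <;> push_cast <;> ring_nf

end PathsVersusSuperHpoly

lemma hpoly_seqFrom_xZ (k M : ℕ) : hpoly k M (seqFrom xZ 1) = hpoly k M xv :=
  hpoly_congr fun i hi _ => by
    rw [seqFrom, xZ, if_neg (by omega)]
    congr
    omega

lemma epoly_seqFrom_bZ (r N j : ℕ) : epoly r N (seqFrom bZ (-j + 1)) = epoly r (N - j) bv := by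
  rw [epoly_eq_of_eq_zero r j fun i _ hi => by rw [seqFrom, bZ, if_pos (by omega)]]
  refine epoly_congr fun i hi _ => ?_
  rw [seqFrom, bZ, if_neg (by push_cast; omega)]
  congr
  omega

/-- The matrix indices `i j : Fin n` are the paper's `i, j` minus one, so the paper's path from
`(-j+1, 1)` to `(μ_i - i + 1, m_i)` reads `(-(j : ℤ), 1)` to `((μ.rowLen i : ℤ) - i, m i)`. -/
theorem Pmat_eq_lattice_path_sum_general (n : ℕ) (μ : YoungDiagram)
    (m : ℕ → ℕ) (hmpos : ∀ i, i < n → 1 ≤ m i)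
    (i j : Fin n) :
    Pmat n μ m xv bv i j
      = ∑ᶠ L ∈ {L : ℕ → ℤ × ℤ |
          IsLatticePath ((μ.rowLen (i : ℕ) : ℤ) - (i : ℕ) + (j : ℕ) + (m (i : ℕ)) - 1).toNat
            (-(j : ℤ), 1) ((μ.rowLen (i : ℕ) : ℤ) - (i : ℕ), (m (i : ℕ) : ℤ)) L},
          pathWeight ((μ.rowLen (i : ℕ) : ℤ) - (i : ℕ) + (j : ℕ) + (m (i : ℕ)) - 1).toNat
            xZ bZ L := by
  change _ = latticePathSum xZ bZ _ _ _
  by_cases hij : μ.rowLen i + j < i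
  · rw [Pmat, if_pos hij, latticePathSum_of_not_le _ _ _ (by rw [Prod.mk_le_mk]; omega)]
  obtain ⟨V, hV⟩ : ∃ V, m i = V + 1 := ⟨m i - 1, by have := hmpos i i.isLt; omega⟩
  have hB : ((μ.rowLen i : ℤ) - i, (m i : ℤ))
      = (-(j : ℤ) + (μ.rowLen i + j - i : ℕ), 1 + (V : ℤ)) := by
    ext <;> push_cast <;> omega
  rw [hB, latticePathSum_eq_superHpoly xZ bZ (by omega), superHpoly_eq_sum_range, Pmat, if_neg hij]
  refine Finset.sum_congr rfl fun r _ => ?_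
  rw [hpoly_seqFrom_xZ, epoly_seqFrom_bZ, ← hV]
  congr 3
  omega

/-- **Lattice path interpretation of the Jacobi–Trudi entries.** With `b_c := 0` for `c ≤ 0`,
for all `1 ≤ i, j ≤ n`, `P_{i,j}^{μ,m}(x | b)` equals the sum of weights of up-right lattice
paths from `(-j+1, 1)` to `(μ_i - i + 1, m_i)`, where a horizontal step `(r,t) → (r+1,t)`
has weight `x_t - b_{r+t}`. (Matrix indices `i j : Fin n` are 0-indexed versions of the
1-indexed mathematical indices, so `(-j+1, 1)` reads `(-(j:ℤ), 1)` and
`(μ_i - i + 1, m_i)` reads `((μ.rowLen i : ℤ) - i, m i)`.) -/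
theorem Pmat_eq_lattice_path_sum (n : ℕ) (μ : YoungDiagram) (hl : μ.colLen 0 ≤ n)
    (m : ℕ → ℕ) (hmpos : ∀ i, i < n → 1 ≤ m i)
    (hmincr : ∀ i j, i ≤ j → j < n → m i ≤ m j) (i j : Fin n) :
    Pmat n μ m xv bv i j
      = ∑ᶠ L ∈ {L : ℕ → ℤ × ℤ |
          IsLatticePath ((μ.rowLen (i : ℕ) : ℤ) - (i : ℕ) + (j : ℕ) + (m (i : ℕ)) - 1).toNat
            (-(j : ℤ), 1) ((μ.rowLen (i : ℕ) : ℤ) - (i : ℕ), (m (i : ℕ) : ℤ)) L},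
          pathWeight ((μ.rowLen (i : ℕ) : ℤ) - (i : ℕ) + (j : ℕ) + (m (i : ℕ)) - 1).toNat
            xZ bZ L :=
  Pmat_eq_lattice_path_sum_general n μ m hmpos i j

end
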